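/- Let F, M ⊆ Sym(n) be subequations. The following three conditions are equivalent: (i) F + M ⊆ F; (ii) F̃ + M ⊆ F̃; (iii) F + F̃ ⊆ M̃. -/

import Mathlib

open Pointwise

/-- The space of symmetric (self-adjoint) real `n × n` matrices. -/
abbrev SymSpace (n : ℕ) : Type := selfAdjoint (Matrix (Fin n) (Fin n) ℝ)

/-- The cone `P` of positive semidefinite symmetric matrices. -/
def PSDcone (n : ℕ) : Set (SymSpace n) :=
  {A | (A : Matrix (Fin n) (Fin n) ℝ).PosSemidef}

/-- The Dirichlet dual `F̃ = Sym(n) \ (-interior F)`. -/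
def dirDual {n : ℕ} (F : Set (SymSpace n)) : Set (SymSpace n) :=
  {A | -A ∉ interior F}

/-!
For closed `F` and for `M` with `M ⊆ closure (interior M)`, the condition `F + M ⊆ F` is
equivalent to `F + interior M ⊆ interior F`, and unwinding the definition of the dual shows that
`F + F̃ ⊆ M̃` says exactly the same thing. Positivity gives `M ⊆ closure (interior M)` and
`closure (interior F) = F`, because the PSD cone is convex with nonempty interior, so `0` is a limit
of its interior points. Applying the equivalence to the closed set `F̃`, whose dual is
`closure (interior F) = F`, turns `F̃ + M ⊆ F̃` into `F̃ + F ⊆ M̃`.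
-/

open Topology

section TopologicalAddGroup

variable {G : Type*} [AddCommGroup G] [TopologicalSpace G] [IsTopologicalAddGroup G]

lemma add_closure_subset_closure_add (s t : Set G) : s + closure t ⊆ closure (s + t) := by
  rintro _ ⟨a, ha, b, hb, rfl⟩
  exact map_mem_closure₂ continuous_add (subset_closure ha) hb fun x hx y hy => Set.add_mem_add hx hy

lemma subset_closure_interior_of_add_subset {M P : Set G} (hMP : M + P ⊆ M)
    (hP : (0 : G) ∈ closure (interior P)) : M ⊆ closure (interior M) := fun m hm => by
  have hm' : m + 0 ∈ closure (M + interior P) :=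
    add_closure_subset_closure_add M _ (Set.add_mem_add hm hP)
  rw [add_zero] at hm'
  exact closure_mono (subset_interior_add_right.trans (interior_mono hMP)) hm'

lemma closure_interior_eq_of_add_subset {F P : Set G} (hF : IsClosed F) (hFP : F + P ⊆ F)
    (hP : (0 : G) ∈ closure (interior P)) : closure (interior F) = F :=
  (closure_minimal interior_subset hF).antisymm (subset_closure_interior_of_add_subset hFP hP)

lemma add_subset_iff_add_interior_subset_interior {F M : Set G} (hF : IsClosed F)
    (hM : M ⊆ closure (interior M)) : F + M ⊆ F ↔ F + interior M ⊆ interior F := by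
  refine ⟨fun h => subset_interior_add_right.trans (interior_mono h), fun h => ?_⟩
  calc F + M ⊆ F + closure (interior M) := Set.add_subset_add_left hM
    _ ⊆ closure (F + interior M) := add_closure_subset_closure_add F _
    _ ⊆ closure (interior F) := closure_mono h
    _ ⊆ F := closure_minimal interior_subset hF

end TopologicalAddGroup

section DirichletDual

variable {n : ℕ}

lemma dirDual_eq_compl_neg_interior (F : Set (SymSpace n)) : dirDual F = (-interior F)ᶜ := rfl

lemma isClosed_dirDual (F : Set (SymSpace n)) : IsClosed (dirDual F) :=
  isOpen_interior.neg.isClosed_compl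

lemma dirDual_dirDual (F : Set (SymSpace n)) : dirDual (dirDual F) = closure (interior F) := by
  rw [dirDual_eq_compl_neg_interior, dirDual_eq_compl_neg_interior, interior_compl, ← neg_closure,
    Set.compl_neg, compl_compl, neg_neg]

lemma add_dirDual_subset_dirDual_iff (F M : Set (SymSpace n)) :
    F + dirDual F ⊆ dirDual M ↔ F + interior M ⊆ interior F := by
  simp only [Set.add_subset_iff, dirDual, Set.mem_ofPred_eq]
  refine forall₂_congr fun a _ => ⟨fun h m hm => ?_, fun h b hb hab => hb ?_⟩
  · by_contra ham
    exact h (-(a + m)) (by simpa using ham) (by simpa using hm)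
  · simpa using h _ hab

end DirichletDual

section PSDcone

open Matrix

instance {n : ℕ} : ContinuousSMul ℝ (SymSpace n) :=
  ⟨(continuous_fst.smul (continuous_subtype_val.comp continuous_snd)).subtype_mk _⟩

lemma convex_PSDcone (n : ℕ) : Convex ℝ (PSDcone n) := fun A hA B hB a b ha hb _ => by
  simp only [PSDcone, Set.mem_ofPred_eq, AddSubgroup.coe_add, selfAdjoint.val_smul]
  exact (hA.smul ha).add (hB.smul hb)

lemma mem_interior_PSDcone_of_posDef {n : ℕ} {A : SymSpace n}
    (hA : (A : Matrix (Fin n) (Fin n) ℝ).PosDef) : A ∈ interior (PSDcone n) := by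
  set q : SymSpace n → (Fin n → ℝ) → ℝ := fun B x => x ⬝ᵥ (B : Matrix (Fin n) (Fin n) ℝ) *ᵥ x
  have hq : Continuous (Function.uncurry q) := by fun_prop
  -- positivity on the compact unit sphere is an open condition, and it extends by homogeneity
  have hnhds : ∀ᶠ B in 𝓝 A, ∀ u ∈ Metric.sphere (0 : Fin n → ℝ) 1, 0 < q B u :=
    (isCompact_sphere 0 1).eventually_forall_of_forall_eventually fun u hu =>
      (isOpen_lt continuous_const hq).mem_nhds <| by
        simpa [q] using hA.dotProduct_mulVec_pos (ne_zero_of_mem_unit_sphere ⟨u, hu⟩)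
  refine mem_interior_iff_mem_nhds.mpr (hnhds.mono fun B hB => ?_)
  refine Matrix.PosSemidef.of_dotProduct_mulVec_nonneg B.2 fun x => ?_
  rcases eq_or_ne x 0 with rfl | hx
  · simp
  have hu : ‖x‖⁻¹ • x ∈ Metric.sphere (0 : Fin n → ℝ) 1 := by simp [norm_smul, hx]
  have hscale : q B x = ‖x‖ ^ 2 * q B (‖x‖⁻¹ • x) := by
    simp only [q, mulVec_smul, dotProduct_smul, smul_dotProduct, smul_eq_mul]
    field_simp
  simpa [q, hscale] using (mul_pos (pow_pos (norm_pos_iff.mpr hx) 2) (hB _ hu)).le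

lemma zero_mem_closure_interior_PSDcone (n : ℕ) :
    (0 : SymSpace n) ∈ closure (interior (PSDcone n)) := by
  rw [(convex_PSDcone n).closure_interior_eq_closure_of_nonempty_interior
    ⟨1, mem_interior_PSDcone_of_posDef (by simpa using Matrix.PosDef.one)⟩]
  exact subset_closure (by simpa [PSDcone] using Matrix.PosSemidef.zero)

end PSDcone

theorem monotonicity_equivalences_general (n : ℕ) (F M : Set (SymSpace n))
    (hFc : IsClosed F) (hFp : F + PSDcone n ⊆ F)
    (hMp : M + PSDcone n ⊆ M) :
    (F + M ⊆ F ↔ dirDual F + M ⊆ dirDual F) ∧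
      (F + M ⊆ F ↔ F + dirDual F ⊆ dirDual M) := by
  have hP := zero_mem_closure_interior_PSDcone n
  have hM := subset_closure_interior_of_add_subset hMp hP
  have hFF : dirDual (dirDual F) = F :=
    (dirDual_dirDual F).trans (closure_interior_eq_of_add_subset hFc hFp hP)
  have key : ∀ G : Set (SymSpace n), IsClosed G → (G + M ⊆ G ↔ G + dirDual G ⊆ dirDual M) :=
    fun G hG => (add_subset_iff_add_interior_subset_interior hG hM).trans
      (add_dirDual_subset_dirDual_iff G M).symm
  refine ⟨?_, key F hFc⟩
  rw [key F hFc, key _ (isClosed_dirDual F), hFF, add_comm]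

/-- For subequations `F, M ⊆ Sym(n)`, the conditions `F + M ⊆ F`, `F̃ + M ⊆ F̃`, and
`F + F̃ ⊆ M̃` are equivalent. -/
theorem monotonicity_equivalences (n : ℕ) (F M : Set (SymSpace n))
    (hFc : IsClosed F) (hFp : F + PSDcone n ⊆ F)
    (hMc : IsClosed M) (hMp : M + PSDcone n ⊆ M) :
    (F + M ⊆ F ↔ dirDual F + M ⊆ dirDual F) ∧
      (F + M ⊆ F ↔ F + dirDual F ⊆ dirDual M) :=
  monotonicity_equivalences_general n F M hFc hFp hMp
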